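/- For h, k ∈ ℕ with k ≥ h, the symplectic spinor s̃_{o,k}^h(x,y,q) = e^{−q²/2} Σ_{p=0}^{h} (−1)^p ((2k+1)!!/(2k−2p+1)!!) binom(h,p) q^{2k+1−2p} (x+iy)^{h−p} (iy)^p (odd in q) and the symplectic spinor s̃_{e,k}^h(x,y,q) = e^{−q²/2} Σ_{p=0}^{h} (−1)^p ((2k)!!/(2k−2p)!!) binom(h,p) q^{2k−2p} (x+iy)^{h−p} (iy)^p (even in q) both lie in the kernel of the symplectic Dirac operator: D_s s̃_{o,k}^h = 0 and D_s s̃_{e,k}^h = 0. Both are homogeneous of degree h in (x,y): E s̃_{o,k}^h = h s̃_{o,k}^h and E s̃_{e,k}^h = h s̃_{e,k}^h. -/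

import Mathlib

noncomputable section

open Complex Finset

/-- Points `(x, y, q)` of `ℝ³`. -/
abbrev P3 := ℝ × ℝ × ℝ

/-- Partial derivative with respect to `x`. -/
def pdx (f : P3 → ℂ) : P3 → ℂ := fun p => deriv (fun t => f (t, p.2.1, p.2.2)) p.1

/-- Partial derivative with respect to `y`. -/
def pdy (f : P3 → ℂ) : P3 → ℂ := fun p => deriv (fun t => f (p.1, t, p.2.2)) p.2.1

/-- Partial derivative with respect to `q`. -/
def pdq (f : P3 → ℂ) : P3 → ℂ := fun p => deriv (fun t => f (p.1, p.2.1, t)) p.2.2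

/-- The symplectic Dirac operator `D_s f = i q ∂_y f − ∂_x ∂_q f`. -/
def Ds (f : P3 → ℂ) : P3 → ℂ := fun p =>
  Complex.I * (p.2.2 : ℂ) * pdy f p - pdx (pdq f) p

/-- The operator `X_s f = y ∂_q f + i x q f`. -/
def Xs (f : P3 → ℂ) : P3 → ℂ := fun p =>
  (p.2.1 : ℂ) * pdq f p + Complex.I * (p.1 : ℂ) * (p.2.2 : ℂ) * f p

/-- The Euler operator `E f = x ∂_x f + y ∂_y f`. -/
def Eul (f : P3 → ℂ) : P3 → ℂ := fun p =>
  (p.1 : ℂ) * pdx f p + (p.2.1 : ℂ) * pdy f p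

/-- The odd basis element
`s̃_{o,k}^h = e^{−q²/2} Σ_{p=0}^{h} (−1)^p ((2k+1)!!/(2k−2p+1)!!) binom(h,p)
q^{2k+1−2p} (x+iy)^{h−p} (iy)^p`. -/
def sOdd (h k : ℕ) : P3 → ℂ := fun r =>
  Complex.exp (-(r.2.2 : ℂ) ^ 2 / 2) *
    ∑ p ∈ Finset.range (h + 1),
      (-1 : ℂ) ^ p * ((Nat.doubleFactorial (2 * k + 1) : ℂ) /
          (Nat.doubleFactorial (2 * k - 2 * p + 1) : ℂ)) * (h.choose p : ℂ) *
        (r.2.2 : ℂ) ^ (2 * k + 1 - 2 * p) *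
          ((r.1 : ℂ) + Complex.I * (r.2.1 : ℂ)) ^ (h - p) *
            (Complex.I * (r.2.1 : ℂ)) ^ p

/-- The even basis element
`s̃_{e,k}^h = e^{−q²/2} Σ_{p=0}^{h} (−1)^p ((2k)!!/(2k−2p)!!) binom(h,p)
q^{2k−2p} (x+iy)^{h−p} (iy)^p`. -/
def sEven (h k : ℕ) : P3 → ℂ := fun r =>
  Complex.exp (-(r.2.2 : ℂ) ^ 2 / 2) *
    ∑ p ∈ Finset.range (h + 1),
      (-1 : ℂ) ^ p * ((Nat.doubleFactorial (2 * k) : ℂ) /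
          (Nat.doubleFactorial (2 * k - 2 * p) : ℂ)) * (h.choose p : ℂ) *
        (r.2.2 : ℂ) ^ (2 * k - 2 * p) *
          ((r.1 : ℂ) + Complex.I * (r.2.1 : ℂ)) ^ (h - p) *
            (Complex.I * (r.2.1 : ℂ)) ^ p

/-!
In the variables `w = x + i y`, `u = i y` both spinors have the form
`e^{-q²/2} Σ_p c_p q^{a_p} w^{h-p} u^p` with `a_p = N - 2p` (`N = 2k + 1` or `N = 2k`).
Since `∂_x = ∂_w` and `∂_y = i (∂_w + ∂_u)`, the Euler operator is `w ∂_w + u ∂_u`, which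
multiplies every term by `(h - p) + p = h`. Likewise
`D_s (e^{-q²/2} g) = -e^{-q²/2} (q ∂_u + ∂_w ∂_q) g`, so the `q ∂_u` part of the `p`-th term
cancels the `∂_w ∂_q` part of the `(p-1)`-st term exactly when `a_{p+1} = a_p - 2` and
`(p + 1) c_{p+1} = -(h - p) a_p c_p`. The double-factorial coefficients satisfy this recursion
as long as `a_p ≥ 2` for `p < h`, i.e. `2h ≤ N`.
-/
def gaussMonomial (a j l : ℕ) : P3 → ℂ := fun r =>
  exp (-(r.2.2 : ℂ) ^ 2 / 2) * (r.2.2 : ℂ) ^ a * ((r.1 : ℂ) + I * r.2.1) ^ j * (I * r.2.1) ^ l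

section gaussMonomial

variable (a j l : ℕ) (x y q : ℝ)

theorem hasDerivAt_gaussMonomial_x :
    HasDerivAt (fun t => gaussMonomial a j l (t, y, q))
      (j * gaussMonomial a (j - 1) l (x, y, q)) x := by
  have hw : HasDerivAt (fun t : ℝ => (t : ℂ) + I * y) 1 x := by
    simpa using (hasDerivAt_id x).ofReal_comp.add_const (I * y)
  exact (((hw.fun_pow j).const_mul (exp (-(q : ℂ) ^ 2 / 2) * (q : ℂ) ^ a)).mul_const
    ((I * y) ^ l)).congr_deriv (by simp only [gaussMonomial]; ring)

theorem hasDerivAt_gaussMonomial_y :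
    HasDerivAt (fun t => gaussMonomial a j l (x, t, q))
      (I * j * gaussMonomial a (j - 1) l (x, y, q) +
        I * l * gaussMonomial a j (l - 1) (x, y, q)) y := by
  have hu : HasDerivAt (fun t : ℝ => I * t) I y := by
    simpa using (hasDerivAt_id y).ofReal_comp.const_mul I
  have hw : HasDerivAt (fun t : ℝ => (x : ℂ) + I * t) I y := hu.const_add _
  exact (((hw.fun_pow j).const_mul (exp (-(q : ℂ) ^ 2 / 2) * (q : ℂ) ^ a)).fun_mul
    (hu.fun_pow l)).congr_deriv (by simp only [gaussMonomial]; ring)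

theorem hasDerivAt_gaussMonomial_q :
    HasDerivAt (fun t => gaussMonomial a j l (x, y, t))
      (a * gaussMonomial (a - 1) j l (x, y, q) - gaussMonomial (a + 1) j l (x, y, q)) q := by
  have hq : HasDerivAt (fun t : ℝ => (t : ℂ)) 1 q := by
    simpa using (hasDerivAt_id q).ofReal_comp
  have hE :
      HasDerivAt (fun t : ℝ => exp (-(t : ℂ) ^ 2 / 2)) (exp (-(q : ℂ) ^ 2 / 2) * -q) q :=
    ((hq.fun_pow 2).fun_neg.div_const 2).cexp.congr_deriv (by push_cast; ring)
  exact (((hE.fun_mul (hq.fun_pow a)).mul_const (((x : ℂ) + I * y) ^ j)).mul_const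
    ((I * y) ^ l)).congr_deriv (by simp only [gaussMonomial, pow_succ]; ring)

theorem ofReal_mul_gaussMonomial :
    (q : ℂ) * gaussMonomial a j l (x, y, q) = gaussMonomial (a + 1) j l (x, y, q) := by
  simp only [gaussMonomial, pow_succ]
  ring

theorem natCast_mul_gaussMonomial_pred_x :
    (j : ℂ) * (((x : ℂ) + I * y) * gaussMonomial a (j - 1) l (x, y, q)) =
      j * gaussMonomial a j l (x, y, q) := by
  cases j with
  | zero => simp
  | succ j => simp only [gaussMonomial, Nat.add_sub_cancel, pow_succ]; ring

theorem natCast_mul_gaussMonomial_pred_y :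
    (l : ℂ) * ((I * y) * gaussMonomial a j (l - 1) (x, y, q)) =
      l * gaussMonomial a j l (x, y, q) := by
  cases l with
  | zero => simp
  | succ l => simp only [gaussMonomial, Nat.add_sub_cancel, pow_succ]; ring

end gaussMonomial

def gaussComb {ι : Type*} (s : Finset ι) (c : ι → ℂ) (a j l : ι → ℕ) : P3 → ℂ := fun r =>
  ∑ i ∈ s, c i * gaussMonomial (a i) (j i) (l i) r

section gaussComb

variable {ι : Type*} (s : Finset ι) (c : ι → ℂ) (a j l : ι → ℕ) (x y q : ℝ)

theorem hasDerivAt_gaussComb_x :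
    HasDerivAt (fun t => gaussComb s c a j l (t, y, q))
      (gaussComb s (fun i => c i * j i) a (fun i => j i - 1) l (x, y, q)) x :=
  (HasDerivAt.fun_sum fun i _ =>
    (hasDerivAt_gaussMonomial_x (a i) (j i) (l i) x y q).const_mul (c i)).congr_deriv
      (by simp only [gaussComb, mul_assoc])

theorem pdy_gaussComb :
    pdy (gaussComb s c a j l) (x, y, q) =
      I * (gaussComb s (fun i => c i * j i) a (fun i => j i - 1) l (x, y, q) +
        gaussComb s (fun i => c i * l i) a j (fun i => l i - 1) (x, y, q)) := by
  refine (HasDerivAt.fun_sum fun i _ =>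
    (hasDerivAt_gaussMonomial_y (a i) (j i) (l i) x y q).const_mul (c i)).deriv.trans ?_
  simp only [gaussComb, ← sum_add_distrib, mul_sum]
  exact sum_congr rfl fun i _ => by ring

theorem pdq_gaussComb :
    pdq (gaussComb s c a j l) =
      gaussComb s (fun i => c i * a i) (fun i => a i - 1) j l -
        gaussComb s c (fun i => a i + 1) j l := by
  funext ⟨x, y, q⟩
  refine (HasDerivAt.fun_sum fun i _ =>
    (hasDerivAt_gaussMonomial_q (a i) (j i) (l i) x y q).const_mul (c i)).deriv.trans ?_
  simp only [gaussComb, Pi.sub_apply, ← sum_sub_distrib]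
  exact sum_congr rfl fun i _ => by ring

theorem pdx_pdq_gaussComb :
    pdx (pdq (gaussComb s c a j l)) (x, y, q) =
      gaussComb s (fun i => c i * a i * j i) (fun i => a i - 1) (fun i => j i - 1) l (x, y, q) -
        gaussComb s (fun i => c i * j i) (fun i => a i + 1) (fun i => j i - 1) l (x, y, q) := by
  rw [pdq_gaussComb]
  exact ((hasDerivAt_gaussComb_x s _ _ j l x y q).sub
    (hasDerivAt_gaussComb_x s c _ j l x y q)).deriv

theorem Ds_gaussComb :
    Ds (gaussComb s c a j l) (x, y, q) =
      -∑ i ∈ s, (c i * l i * gaussMonomial (a i + 1) (j i) (l i - 1) (x, y, q) +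
        c i * a i * j i * gaussMonomial (a i - 1) (j i - 1) (l i) (x, y, q)) := by
  simp only [Ds, pdy_gaussComb, pdx_pdq_gaussComb]
  simp only [gaussComb, ← sum_add_distrib, ← sum_sub_distrib, mul_sum, ← sum_neg_distrib]
  refine sum_congr rfl fun i _ => ?_
  linear_combination
    (c i * j i * (q * gaussMonomial (a i) (j i - 1) (l i) (x, y, q)) +
        c i * l i * (q * gaussMonomial (a i) (j i) (l i - 1) (x, y, q))) * I_mul_I -
      c i * j i * ofReal_mul_gaussMonomial (a i) (j i - 1) (l i) x y q -
      c i * l i * ofReal_mul_gaussMonomial (a i) (j i) (l i - 1) x y q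

theorem Eul_gaussComb :
    Eul (gaussComb s c a j l) (x, y, q) =
      gaussComb s (fun i => c i * (j i + l i)) a j l (x, y, q) := by
  have hx : pdx (gaussComb s c a j l) (x, y, q) = _ :=
    (hasDerivAt_gaussComb_x s c a j l x y q).deriv
  simp only [Eul, hx, pdy_gaussComb]
  simp only [gaussComb, mul_sum, ← sum_add_distrib]
  refine sum_congr rfl fun i _ => ?_
  linear_combination c i * natCast_mul_gaussMonomial_pred_x (a i) (j i) (l i) x y q +
    c i * natCast_mul_gaussMonomial_pred_y (a i) (j i) (l i) x y q

end gaussComb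

theorem sum_range_succ_add_eq_zero_of_cancel {M : Type*} [AddCommMonoid M] {h : ℕ}
    (A B : ℕ → M) (hA : A 0 = 0) (hB : B h = 0) (hAB : ∀ p < h, A (p + 1) + B p = 0) :
    ∑ p ∈ range (h + 1), (A p + B p) = 0 := by
  rw [sum_add_distrib, sum_range_succ' A, sum_range_succ B, hA, hB, add_zero, add_zero,
    ← sum_add_distrib]
  exact sum_eq_zero fun p hp => hAB p (mem_range.1 hp)

def dfCoeff (h N p : ℕ) : ℂ :=
  (-1) ^ p * ((N.doubleFactorial : ℂ) / ((N - 2 * p).doubleFactorial : ℂ)) * h.choose p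

theorem succ_mul_dfCoeff {h N p : ℕ} (hp : 2 * p + 2 ≤ N) :
    (p + 1 : ℂ) * dfCoeff h N (p + 1) =
      -(dfCoeff h N p * ((N - 2 * p : ℕ) : ℂ) * ((h - p : ℕ) : ℂ)) := by
  have hN : N - 2 * p = N - 2 * (p + 1) + 2 := by omega
  have hdf : ((N - 2 * p).doubleFactorial : ℂ) =
      ((N - 2 * p : ℕ) : ℂ) * (N - 2 * (p + 1)).doubleFactorial := by
    conv_lhs => rw [hN, Nat.doubleFactorial_add_two, ← hN]
    push_cast
    ring
  have hchoose : (h.choose (p + 1) : ℂ) * (p + 1) = h.choose p * ((h - p : ℕ) : ℂ) := by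
    exact_mod_cast Nat.choose_succ_right_eq h p
  have hratio :
      (N.doubleFactorial : ℂ) / (N - 2 * p).doubleFactorial * ((N - 2 * p : ℕ) : ℂ) =
        N.doubleFactorial / (N - 2 * (p + 1)).doubleFactorial := by
    have hN_ne : ((N - 2 * p : ℕ) : ℂ) ≠ 0 := by exact_mod_cast (by omega : N - 2 * p ≠ 0)
    rw [hdf]
    field_simp
  simp only [dfCoeff]
  linear_combination
    -(-1) ^ p * ((N.doubleFactorial : ℂ) / (N - 2 * (p + 1)).doubleFactorial) * hchoose +
      (-1) ^ p * (h.choose p : ℂ) * ((h - p : ℕ) : ℂ) * hratio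

def dfSpinor (h N : ℕ) : P3 → ℂ :=
  gaussComb (range (h + 1)) (dfCoeff h N) (fun p => N - 2 * p) (fun p => h - p) id

theorem Ds_dfSpinor {h N : ℕ} (hN : 2 * h ≤ N) (r : P3) : Ds (dfSpinor h N) r = 0 := by
  obtain ⟨x, y, q⟩ := r
  rw [dfSpinor, Ds_gaussComb, neg_eq_zero]
  refine sum_range_succ_add_eq_zero_of_cancel _ _ (by simp) (by simp) fun p hp => ?_
  have ha : N - 2 * (p + 1) + 1 = N - 2 * p - 1 := by omega
  have hj : h - (p + 1) = h - p - 1 := by omega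
  simp only [id, ha, hj, Nat.add_sub_cancel, Nat.cast_succ]
  linear_combination gaussMonomial (N - 2 * p - 1) (h - p - 1) p (x, y, q) *
    succ_mul_dfCoeff (h := h) (N := N) (p := p) (by omega)

theorem Eul_dfSpinor (h N : ℕ) (r : P3) : Eul (dfSpinor h N) r = h * dfSpinor h N r := by
  obtain ⟨x, y, q⟩ := r
  rw [dfSpinor, Eul_gaussComb]
  simp only [gaussComb, mul_sum]
  refine sum_congr rfl fun p hp => ?_
  rw [id, Nat.cast_sub (Nat.lt_succ_iff.1 (mem_range.1 hp))]
  ring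

theorem sOdd_eq_dfSpinor {h k : ℕ} (hkh : h ≤ k) : sOdd h k = dfSpinor h (2 * k + 1) := by
  funext r
  simp only [sOdd, dfSpinor, gaussComb, gaussMonomial, dfCoeff, mul_sum]
  refine sum_congr rfl fun p hp => ?_
  have hexp : 2 * k - 2 * p + 1 = 2 * k + 1 - 2 * p := by
    have := mem_range.1 hp
    omega
  rw [hexp, id]
  ring

theorem sEven_eq_dfSpinor (h k : ℕ) : sEven h k = dfSpinor h (2 * k) := by
  funext r
  simp only [sEven, dfSpinor, gaussComb, gaussMonomial, dfCoeff, mul_sum]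
  exact sum_congr rfl fun p _ => by rw [id]; ring

/-- For `k ≥ h`, the spinors `s̃_{o,k}^h` and `s̃_{e,k}^h` are symplectic monogenics of
homogeneity `h`: they lie in the kernel of `D_s` and `E` acts on them by `h`. -/
theorem sOdd_sEven_monogenic (h k : ℕ) (hkh : h ≤ k) :
    (∀ p, Ds (sOdd h k) p = 0) ∧ (∀ p, Ds (sEven h k) p = 0) ∧
    (∀ p, Eul (sOdd h k) p = (h : ℂ) * sOdd h k p) ∧
    (∀ p, Eul (sEven h k) p = (h : ℂ) * sEven h k p) := by
  rw [sOdd_eq_dfSpinor hkh, sEven_eq_dfSpinor]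
  exact ⟨Ds_dfSpinor (by omega), Ds_dfSpinor (by omega), Eul_dfSpinor h _, Eul_dfSpinor h _⟩
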